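/- Let p be an internal point, q0 an external point on the passant line p⊥, and ℓ* a tangent line through q0. Let p1 and p2 be two distinct external points on ℓ*, and let ℓ1 and ℓ2 be the tangent lines through p1 and p2 respectively other than ℓ*. Then ℓ1 ≠ ℓ2, their intersection point p3 is an external point, and the line through p and p3 is a secant line if and only if either (i) the line through p and p1 and the line through p and p2 are both passant lines, or (ii) the line through p and p1 and the line through p and p2 are both secant lines. -/

import Mathlib

/- Setting: `K` is a finite field of odd order `q`.  Points and lines of
`PG(2,q)` are both represented as points of the projectivization of `K^3`
(homogeneous coordinates), with incidence given by vanishing of the dot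
product.  `O` is the conic `X1^2 - X0*X2 = 0`. -/

open scoped Classical

noncomputable section

namespace ConicCode

variable (K : Type*) [Field K] [Fintype K]

abbrev Pt := Projectivization K (Fin 3 → K)

instance : Finite (Pt K) := Quotient.finite _

noncomputable instance : Fintype (Pt K) := Fintype.ofFinite _

variable {K}

/-- Dot product of two coordinate triples. -/
def dotV (v w : Fin 3 → K) : K := v 0 * w 0 + v 1 * w 1 + v 2 * w 2

/-- Incidence between a point and a line (both given by projective triples). -/
def Incid (p ℓ : Pt K) : Prop := dotV p.rep ℓ.rep = 0

/-- Membership in the conic `O` defined by `X1^2 - X0*X2`. -/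
def OnConic (p : Pt K) : Prop := p.rep 1 ^ 2 - p.rep 0 * p.rep 2 = 0

/-- A tangent line meets `O` in exactly one point. -/
def Tangent (ℓ : Pt K) : Prop := {p : Pt K | OnConic p ∧ Incid p ℓ}.ncard = 1

/-- A secant line meets `O` in exactly two points. -/
def Secant (ℓ : Pt K) : Prop := {p : Pt K | OnConic p ∧ Incid p ℓ}.ncard = 2

/-- A passant line misses `O`. -/
def Passant (ℓ : Pt K) : Prop := {p : Pt K | OnConic p ∧ Incid p ℓ}.ncard = 0

/-- An external point lies on exactly two tangent lines. -/
def External (p : Pt K) : Prop := {ℓ : Pt K | Tangent ℓ ∧ Incid p ℓ}.ncard = 2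

/-- An internal point lies on no tangent line. -/
def Internal (p : Pt K) : Prop := {ℓ : Pt K | Tangent ℓ ∧ Incid p ℓ}.ncard = 0


/-- Coordinates of the polar line of the point `(a0,a1,a2)`: `[-a2/2, a1, -a0/2]`. -/
def perpVec (v : Fin 3 → K) : Fin 3 → K := ![-(v 2) / 2, v 1, -(v 0) / 2]

/-- The polarity `⊥` induced by the conic `O`.  (In odd characteristic
`perpVec` of a nonzero vector is nonzero, so the `else` branch is never
taken.) -/
def perp (p : Pt K) : Pt K :=
  if h : perpVec p.rep ≠ 0 then Projectivization.mk K _ h else p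

/-- Cross product: coordinates of the line through two distinct points. -/
def crossVec (v w : Fin 3 → K) : Fin 3 → K :=
  ![v 1 * w 2 - v 2 * w 1, v 2 * w 0 - v 0 * w 2, v 0 * w 1 - v 1 * w 0]

/-- The line through two distinct points (junk value if the points coincide). -/
def lineThrough (p q : Pt K) : Pt K :=
  if h : crossVec p.rep q.rep ≠ 0 then Projectivization.mk K _ h else p

/-- The intersection point of two distinct lines (junk value if they coincide). -/
def meetPt (l m : Pt K) : Pt K := lineThrough l m

set_option linter.unusedSectionVars false
section Aux

open Projectivization

variable {K : Type*} [Field K] [Fintype K]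

/-- discriminant-type quadratic form of a point triple -/
def Qv (v : Fin 3 → K) : K := v 1 ^ 2 - v 0 * v 2

/-- discriminant of a line triple -/
def Dv (w : Fin 3 → K) : K := w 1 ^ 2 - 4 * w 0 * w 2

lemma dotV_smul_left (c : K) (v w : Fin 3 → K) : dotV (c • v) w = c * dotV v w := by
  simp only [dotV, Pi.smul_apply, smul_eq_mul]; ring

lemma dotV_smul_right (c : K) (v w : Fin 3 → K) : dotV v (c • w) = c * dotV v w := by
  simp only [dotV, Pi.smul_apply, smul_eq_mul]; ring

lemma Qv_smul (c : K) (v : Fin 3 → K) : Qv (c • v) = c ^ 2 * Qv v := by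
  simp only [Qv, Pi.smul_apply, smul_eq_mul]; ring

lemma Dv_smul (c : K) (v : Fin 3 → K) : Dv (c • v) = c ^ 2 * Dv v := by
  simp only [Dv, Pi.smul_apply, smul_eq_mul]; ring

lemma incid_right_mk (p : Pt K) (w : Fin 3 → K) (hw : w ≠ 0) :
    Incid p (Projectivization.mk K w hw) ↔ dotV p.rep w = 0 := by
  obtain ⟨a, ha⟩ := exists_smul_eq_mk_rep K w hw
  unfold Incid
  rw [← ha, Units.smul_def, dotV_smul_right]
  simp [Units.ne_zero]

lemma incid_left_mk (v : Fin 3 → K) (hv : v ≠ 0) (ℓ : Pt K) :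
    Incid (Projectivization.mk K v hv) ℓ ↔ dotV v ℓ.rep = 0 := by
  obtain ⟨a, ha⟩ := exists_smul_eq_mk_rep K v hv
  unfold Incid
  rw [← ha, Units.smul_def, dotV_smul_left]
  simp [Units.ne_zero]

lemma onConic_mk (v : Fin 3 → K) (hv : v ≠ 0) :
    OnConic (Projectivization.mk K v hv) ↔ Qv v = 0 := by
  obtain ⟨a, ha⟩ := exists_smul_eq_mk_rep K v hv
  have h : OnConic (Projectivization.mk K v hv) ↔ Qv (Projectivization.mk K v hv).rep = 0 :=
    Iff.rfl
  rw [h, ← ha, Units.smul_def, Qv_smul]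
  simp [pow_eq_zero_iff, Units.ne_zero]

lemma mk_smul_eq (c : K) (hc : c ≠ 0) (v : Fin 3 → K) (h' : c • v ≠ 0) (hv : v ≠ 0) :
    Projectivization.mk K (c • v) h' = Projectivization.mk K v hv :=
  (Projectivization.mk_eq_mk_iff K _ _ _ _).mpr ⟨Units.mk0 c hc, rfl⟩

lemma isSquare_sq_mul {a : K} (x : K) (ha : a ≠ 0) : IsSquare (a ^ 2 * x) ↔ IsSquare x := by
  constructor
  · rintro ⟨r, hr⟩
    exact ⟨r / a, by field_simp; linear_combination hr⟩
  · rintro ⟨r, hr⟩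
    exact ⟨a * r, by rw [hr]; ring⟩

lemma two_ne_zero'' (hodd : Odd (Fintype.card K)) : (2 : K) ≠ 0 := by
  intro h2
  have hchar : ringChar K = 2 := by
    have : (↑(2 : ℕ) : K) = 0 := by push_cast; exact h2
    have hdvd : ringChar K ∣ 2 := (ringChar.spec K 2).mp this
    rcases (Nat.dvd_prime Nat.prime_two).mp hdvd with h | h
    · exact absurd h (CharP.ringChar_ne_one)
    · exact h
  have h := FiniteField.even_card_iff_char_two.mp hchar
  rw [Nat.odd_iff] at hodd
  omega

end Aux
set_option linter.unusedSectionVars false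
section Aux2

open Projectivization

variable {K : Type*} [Field K] [Fintype K]

lemma quad_count (h2 : (2 : K) ≠ 0) (α β γ : K) (h : ¬(α = 0 ∧ β = 0 ∧ γ = 0)) :
    {t : K | α * t ^ 2 + β * t + γ = 0}.ncard + (if α = 0 then 1 else 0)
      = if β ^ 2 - 4 * α * γ = 0 then 1 else
          if IsSquare (β ^ 2 - 4 * α * γ) then 2 else 0 := by
  by_cases hα : α = 0
  · subst hα
    by_cases hβ : β = 0
    · subst hβ
      have hγ : γ ≠ 0 := by tauto
      have hset : {t : K | (0:K) * t ^ 2 + 0 * t + γ = 0} = ∅ := by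
        ext t; simp [hγ]
      rw [hset]
      simp [hγ]
    · have hset : {t : K | (0:K) * t ^ 2 + β * t + γ = 0} = {-γ / β} := by
        ext t
        simp only [Set.mem_setOf_eq, Set.mem_singleton_iff]
        rw [zero_mul, zero_add]
        constructor
        · intro ht
          rw [eq_div_iff hβ]
          linear_combination ht
        · intro ht; subst ht; field_simp; ring
      have hd : β ^ 2 - 4 * 0 * γ = β ^ 2 := by ring
      rw [hset, hd, Set.ncard_singleton, if_pos rfl, if_neg (pow_ne_zero 2 hβ),
        if_pos ⟨β, by ring⟩]
  · rw [if_neg hα]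
    have h2α : 2 * α ≠ 0 := mul_ne_zero h2 hα
    have h4α : 4 * α ≠ 0 := by
      have : (4:K) = 2 * 2 := by norm_num
      rw [this, mul_assoc]; exact mul_ne_zero h2 (mul_ne_zero h2 hα)
    by_cases hs : IsSquare (β ^ 2 - 4 * α * γ)
    · obtain ⟨r, hr⟩ := hs
      have hset : {t : K | α * t ^ 2 + β * t + γ = 0}
          = {(-β + r) / (2 * α), (-β - r) / (2 * α)} := by
        ext t
        simp only [Set.mem_setOf_eq, Set.mem_insert_iff, Set.mem_singleton_iff]
        constructor
        · intro ht
          have key : (2 * α * t + β - r) * (2 * α * t + β + r) = 0 := by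
            linear_combination (4 * α) * ht + hr
          rcases mul_eq_zero.mp key with hk | hk
          · left; rw [eq_div_iff h2α]; linear_combination hk
          · right; rw [eq_div_iff h2α]; linear_combination hk
        · intro ht
          have key : (2 * α * t + β - r) * (2 * α * t + β + r) = 0 := by
            rcases ht with ht | ht
            · have h1 : 2 * α * t + β - r = 0 := by
                rw [ht]; field_simp; ring
              rw [h1, zero_mul]
            · have h1 : 2 * α * t + β + r = 0 := by
                rw [ht]; field_simp
                ring
              rw [h1, mul_zero]
          have h4 : (4 * α) * (α * t ^ 2 + β * t + γ) = 0 := by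
            linear_combination key - hr
          exact (mul_eq_zero.mp h4).resolve_left h4α
      rw [hset]
      by_cases hd : β ^ 2 - 4 * α * γ = 0
      · rw [if_pos hd]
        have hr0 : r = 0 := mul_self_eq_zero.mp (by rw [← hr]; exact hd)
        subst hr0
        simp only [add_zero, sub_zero]
        rw [Set.pair_eq_singleton, Set.ncard_singleton]
      · rw [if_neg hd, if_pos ⟨r, hr⟩]
        have hrne : r ≠ 0 := by
          intro h0; subst h0; exact hd (by rw [hr]; ring)
        have hne : (-β + r) / (2 * α) ≠ (-β - r) / (2 * α) := by
          intro hEq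
          rw [div_eq_div_iff h2α h2α] at hEq
          have h2r : 2 * (r * (2 * α)) = 0 := by linear_combination hEq
          rcases mul_eq_zero.mp h2r with h | h
          · exact h2 h
          · exact mul_ne_zero hrne h2α h
        rw [Set.ncard_pair hne]
    · have hd : β ^ 2 - 4 * α * γ ≠ 0 := by
        intro h0; exact hs (h0 ▸ ⟨0, by ring⟩)
      rw [if_neg hd, if_neg hs]
      have hset : {t : K | α * t ^ 2 + β * t + γ = 0} = ∅ := by
        ext t
        simp only [Set.mem_setOf_eq, Set.mem_empty_iff_false, iff_false]
        intro ht
        exact hs ⟨2 * α * t + β, by linear_combination (-4 * α) * ht⟩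
      rw [hset]
      simp

end Aux2
set_option linter.unusedSectionVars false
section Aux3

open Projectivization

variable {K : Type*} [Field K] [Fintype K]

lemma vec1t_ne (t : K) : (![1, t, t ^ 2] : Fin 3 → K) ≠ 0 := by
  intro h; simpa using congrFun h 0

lemma vec001_ne : (![0, 0, 1] : Fin 3 → K) ≠ 0 := by
  intro h; simpa using congrFun h 2

lemma incid_mk_mk (v w : Fin 3 → K) (hv : v ≠ 0) (hw : w ≠ 0) :
    Incid (Projectivization.mk K v hv) (Projectivization.mk K w hw) ↔ dotV v w = 0 := by
  rw [incid_right_mk]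
  obtain ⟨a, ha⟩ := exists_smul_eq_mk_rep K v hv
  rw [← ha, Units.smul_def, dotV_smul_left]
  simp [Units.ne_zero]

lemma onConic_cases {pt : Pt K} (h : OnConic pt) :
    (∃ t : K, pt = Projectivization.mk K ![1, t, t ^ 2] (vec1t_ne t)) ∨
      pt = Projectivization.mk K ![0, 0, 1] vec001_ne := by
  have hQ : pt.rep 1 ^ 2 - pt.rep 0 * pt.rep 2 = 0 := h
  by_cases h0 : pt.rep 0 = 0
  · right
    have h1 : pt.rep 1 = 0 := by
      have : pt.rep 1 ^ 2 = 0 := by rw [h0] at hQ; linear_combination hQ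
      exact (pow_eq_zero_iff (by norm_num : (2:ℕ) ≠ 0)).mp this
    have hne2 : pt.rep 2 ≠ 0 := by
      intro h2
      exact pt.rep_nonzero (funext fun i => by fin_cases i <;> simp [h0, h1, h2])
    conv_lhs => rw [← pt.mk_rep]
    refine (Projectivization.mk_eq_mk_iff K _ _ _ _).mpr ⟨Units.mk0 _ hne2, ?_⟩
    funext i
    fin_cases i <;> simp [Units.smul_def, h0, h1]
  · left
    refine ⟨pt.rep 1 / pt.rep 0, ?_⟩
    conv_lhs => rw [← pt.mk_rep]
    refine (Projectivization.mk_eq_mk_iff K _ _ _ _).mpr ⟨Units.mk0 _ h0, ?_⟩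
    funext i
    fin_cases i <;> simp [Units.smul_def]
    · field_simp
    · field_simp; linear_combination hQ

lemma line_count (h2 : (2 : K) ≠ 0) (w : Fin 3 → K) (hw : w ≠ 0) :
    {p : Pt K | OnConic p ∧ Incid p (Projectivization.mk K w hw)}.ncard
      = if Dv w = 0 then 1 else if IsSquare (Dv w) then 2 else 0 := by
  classical
  set f : K → Pt K := fun t => Projectivization.mk K ![1, t, t ^ 2] (vec1t_ne t) with hf
  have hinj : Function.Injective f := by
    intro t t' hEq
    obtain ⟨a, ha⟩ := (Projectivization.mk_eq_mk_iff K _ _ _ _).mp hEq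
    have h0 := congrFun ha 0
    have h1 := congrFun ha 1
    simp [Units.smul_def] at h0 h1
    simp [h0] at h1
    exact h1.symm
  set R : Set K := {t : K | w 2 * t ^ 2 + w 1 * t + w 0 = 0} with hR
  set B : Set (Pt K) :=
    if w 2 = 0 then {Projectivization.mk K ![0, 0, 1] vec001_ne} else ∅ with hB
  have honC : ∀ t : K, OnConic (f t) := by
    intro t
    rw [hf, onConic_mk]
    simp [Qv]
  have hsplit : {p : Pt K | OnConic p ∧ Incid p (Projectivization.mk K w hw)} = f '' R ∪ B := by
    ext pt
    simp only [Set.mem_setOf_eq, Set.mem_union]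
    constructor
    · rintro ⟨hOC, hInc⟩
      rcases onConic_cases hOC with ⟨t, rfl⟩ | rfl
      · left
        refine ⟨t, ?_, rfl⟩
        have := (incid_mk_mk _ _ _ _).mp hInc
        simp [dotV] at this
        show w 2 * t ^ 2 + w 1 * t + w 0 = 0
        linear_combination this
      · right
        have := (incid_mk_mk _ _ _ _).mp hInc
        simp [dotV] at this
        rw [hB, if_pos this]
        exact rfl
    · rintro (⟨t, ht, rfl⟩ | hpt)
      · refine ⟨honC t, ?_⟩
        rw [incid_mk_mk]
        have : w 2 * t ^ 2 + w 1 * t + w 0 = 0 := ht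
        simp [dotV]
        linear_combination this
      · rw [hB] at hpt
        by_cases hw2 : w 2 = 0
        · rw [if_pos hw2] at hpt
          rw [Set.mem_singleton_iff] at hpt
          subst hpt
          constructor
          · rw [onConic_mk]; simp [Qv]
          · rw [incid_mk_mk]; simp [dotV, hw2]
        · rw [if_neg hw2] at hpt
          exact absurd hpt (Set.notMem_empty _)
  have hdisj : Disjoint (f '' R) B := by
    rw [Set.disjoint_right]
    intro x hxB hxA
    obtain ⟨t, _, hft⟩ := hxA
    rw [hB] at hxB
    by_cases hw2 : w 2 = 0
    · rw [if_pos hw2, Set.mem_singleton_iff] at hxB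
      rw [← hft] at hxB
      obtain ⟨a, ha⟩ := (Projectivization.mk_eq_mk_iff K _ _ _ _).mp hxB
      have h0 := congrFun ha 0
      simp [Units.smul_def] at h0
    · rw [if_neg hw2] at hxB
      exact absurd hxB (Set.notMem_empty _)
  rw [hsplit, Set.ncard_union_eq hdisj (Set.toFinite _) (Set.toFinite _),
    Set.ncard_image_of_injective R hinj]
  have hBcard : B.ncard = if w 2 = 0 then 1 else 0 := by
    rw [hB]; split_ifs <;> simp
  rw [hBcard]
  have hdisc : (w 1) ^ 2 - 4 * (w 2) * (w 0) = Dv w := by simp [Dv]; ring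
  have hnz : ¬(w 2 = 0 ∧ w 1 = 0 ∧ w 0 = 0) := by
    rintro ⟨ha, hb, hc⟩
    exact hw (funext fun i => by fin_cases i <;> simp [ha, hb, hc])
  have := quad_count h2 (w 2) (w 1) (w 0) hnz
  rw [hdisc] at this
  exact this

lemma tangent_mk (h2 : (2 : K) ≠ 0) {w : Fin 3 → K} (hw : w ≠ 0) :
    Tangent (Projectivization.mk K w hw) ↔ Dv w = 0 := by
  unfold Tangent
  rw [line_count h2 w hw]
  split_ifs with hd hs
  · simp [hd]
  · simp [hd]
  · simp [hd]

lemma secant_mk (h2 : (2 : K) ≠ 0) {w : Fin 3 → K} (hw : w ≠ 0) :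
    Secant (Projectivization.mk K w hw) ↔ Dv w ≠ 0 ∧ IsSquare (Dv w) := by
  unfold Secant
  rw [line_count h2 w hw]
  split_ifs with hd hs
  · simp [hd]
  · simp [hd, hs]
  · simp [hd, hs]
lemma passant_mk (h2 : (2 : K) ≠ 0) {w : Fin 3 → K} (hw : w ≠ 0) :
    Passant (Projectivization.mk K w hw) ↔ ¬IsSquare (Dv w) := by
  unfold Passant
  rw [line_count h2 w hw]
  split_ifs with hd hs
  · simp [hd, IsSquare.zero]
  · simp [hs]
  · simp [hs]

lemma tangent_iff_rep (h2 : (2 : K) ≠ 0) (ℓ : Pt K) : Tangent ℓ ↔ Dv ℓ.rep = 0 := by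
  conv_lhs => rw [← ℓ.mk_rep]
  exact tangent_mk h2 _

lemma secant_iff_rep (h2 : (2 : K) ≠ 0) (ℓ : Pt K) :
    Secant ℓ ↔ Dv ℓ.rep ≠ 0 ∧ IsSquare (Dv ℓ.rep) := by
  conv_lhs => rw [← ℓ.mk_rep]
  exact secant_mk h2 _

lemma passant_iff_rep (h2 : (2 : K) ≠ 0) (ℓ : Pt K) : Passant ℓ ↔ ¬IsSquare (Dv ℓ.rep) := by
  conv_lhs => rw [← ℓ.mk_rep]
  exact passant_mk h2 _

end Aux3
set_option linter.unusedSectionVars false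
section Aux4

open Projectivization

variable {K : Type*} [Field K] [Fintype K]

/-- tangent line at conic point with homogeneous parameter (x:y) -/
def tl (x y : K) : Fin 3 → K := ![y ^ 2, -(2 * x * y), x ^ 2]

lemma funext3 {v w : Fin 3 → K} (h0 : v 0 = w 0) (h1 : v 1 = w 1) (h2 : v 2 = w 2) :
    v = w := by
  funext i
  fin_cases i
  exacts [h0, h1, h2]

lemma tl_ne_zero {x y : K} (h : ¬(x = 0 ∧ y = 0)) : tl x y ≠ 0 := by
  intro h0
  have hy := congrFun h0 0
  have hx := congrFun h0 2
  simp [tl] at hx hy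
  exact h ⟨hx, hy⟩

lemma tl_params_ne {x y : K} (h : tl x y ≠ 0) : ¬(x = 0 ∧ y = 0) := by
  rintro ⟨rfl, rfl⟩
  exact h (funext fun i => by fin_cases i <;> simp [tl])

lemma Dv_tl (x y : K) : Dv (tl x y) = 0 := by simp [Dv, tl]; ring

lemma tangent_tl (h2 : (2 : K) ≠ 0) {x y : K} (hne : tl x y ≠ 0) :
    Tangent (Projectivization.mk K (tl x y) hne) := (tangent_mk h2 _).mpr (Dv_tl x y)

lemma tangent_param (h2 : (2 : K) ≠ 0) {ℓ : Pt K} (h : Tangent ℓ) :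
    ∃ x y : K, ∃ hne : tl x y ≠ 0, ℓ = Projectivization.mk K (tl x y) hne := by
  rw [tangent_iff_rep h2] at h
  by_cases h0 : ℓ.rep 0 = 0
  · have h1 : ℓ.rep 1 = 0 := by
      have : ℓ.rep 1 ^ 2 = 0 := by
        have hD : Dv ℓ.rep = 0 := h
        unfold Dv at hD
        rw [h0] at hD
        linear_combination hD
      exact (pow_eq_zero_iff (by norm_num : (2:ℕ) ≠ 0)).mp this
    have hne2 : ℓ.rep 2 ≠ 0 := by
      intro hc
      exact ℓ.rep_nonzero (funext fun i => by fin_cases i <;> simp [h0, h1, hc])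
    refine ⟨1, 0, tl_ne_zero (by simp), ?_⟩
    conv_lhs => rw [← ℓ.mk_rep]
    refine (Projectivization.mk_eq_mk_iff K _ _ _ _).mpr ⟨Units.mk0 _ hne2, ?_⟩
    funext i
    fin_cases i <;> simp [tl, Units.smul_def, h0, h1]
  · have hD : (ℓ.rep 1) ^ 2 = 4 * ℓ.rep 0 * ℓ.rep 2 := by
      have hD : Dv ℓ.rep = 0 := h
      unfold Dv at hD
      linear_combination hD
    have h4 : (4 : K) * ℓ.rep 0 ≠ 0 := by
      have h4' : (4 : K) = 2 * 2 := by norm_num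
      rw [h4', mul_assoc]
      exact mul_ne_zero h2 (mul_ne_zero h2 h0)
    refine ⟨-(ℓ.rep 1), 2 * ℓ.rep 0, tl_ne_zero (by
      rintro ⟨-, hy⟩
      exact h0 (by rcases mul_eq_zero.mp hy with h | h
                   · exact absurd h h2
                   · exact h)), ?_⟩
    conv_lhs => rw [← ℓ.mk_rep]
    refine (Projectivization.mk_eq_mk_iff K _ _ _ _).mpr
      ⟨Units.mk0 ((4 * ℓ.rep 0)⁻¹) (inv_ne_zero h4), ?_⟩
    refine funext3 ?_ ?_ ?_ <;>
      simp only [tl, Units.smul_def, Units.val_mk0, Pi.smul_apply, smul_eq_mul,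
        Matrix.cons_val_zero, Matrix.cons_val_one, Matrix.head_cons,
        Matrix.cons_val_two, Matrix.tail_cons]
    · have h4' : (4 : K) ≠ 0 := left_ne_zero_of_mul h4
      field_simp; ring
    · have h4' : (4 : K) ≠ 0 := left_ne_zero_of_mul h4
      field_simp; ring
    · have h4' : (4 : K) ≠ 0 := left_ne_zero_of_mul h4
      field_simp; linear_combination hD

end Aux4
set_option linter.unusedSectionVars false
section Aux5

open Projectivization

variable {K : Type*} [Field K] [Fintype K]

lemma tl10 : (tl 1 0 : Fin 3 → K) = ![0, 0, 1] := by
  refine funext3 ?_ ?_ ?_ <;> simp [tl]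

lemma point_count (h2 : (2 : K) ≠ 0) (v : Fin 3 → K) (hv : v ≠ 0) :
    {ℓ : Pt K | Tangent ℓ ∧ Incid (Projectivization.mk K v hv) ℓ}.ncard
      = if Qv v = 0 then 1 else if IsSquare (Qv v) then 2 else 0 := by
  classical
  have htl1 : ∀ u : K, tl u 1 ≠ 0 := fun u => tl_ne_zero (by simp)
  have htl10 : (tl 1 0 : Fin 3 → K) ≠ 0 := tl_ne_zero (by simp)
  set f : K → Pt K := fun u => Projectivization.mk K (tl u 1) (htl1 u) with hf
  have hinj : Function.Injective f := by
    intro u u' hEq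
    obtain ⟨a, ha⟩ := (Projectivization.mk_eq_mk_iff K _ _ _ _).mp hEq
    have h0 := congrFun ha 0
    have h1 := congrFun ha 1
    simp only [tl, Units.smul_def, Pi.smul_apply, smul_eq_mul, Matrix.cons_val_zero,
      Matrix.cons_val_one, Matrix.head_cons] at h0 h1
    have ha1 : (a : K) = 1 := by simpa using h0
    rw [ha1, one_mul, neg_inj, mul_one, mul_one] at h1
    exact (mul_left_cancel₀ h2 h1).symm
  set R : Set K := {u : K | v 2 * u ^ 2 + -(2 * v 1) * u + v 0 = 0} with hR
  set B : Set (Pt K) :=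
    if v 2 = 0 then {Projectivization.mk K (tl 1 0) htl10} else ∅ with hB
  have hsplit : {ℓ : Pt K | Tangent ℓ ∧ Incid (Projectivization.mk K v hv) ℓ} = f '' R ∪ B := by
    ext ℓ
    simp only [Set.mem_setOf_eq, Set.mem_union]
    constructor
    · rintro ⟨hT, hI⟩
      obtain ⟨x, y, hne, rfl⟩ := tangent_param h2 hT
      have hdot : dotV v (tl x y) = 0 := (incid_mk_mk _ _ _ _).mp hI
      have hdot' : v 0 * y ^ 2 - 2 * v 1 * (x * y) + v 2 * x ^ 2 = 0 := by
        simp [dotV, tl] at hdot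
        linear_combination hdot
      by_cases hy : y = 0
      · subst hy
        have hx : x ≠ 0 := fun hx => (tl_params_ne hne) ⟨hx, rfl⟩
        have hv2 : v 2 = 0 := by
          have : v 2 * x ^ 2 = 0 := by linear_combination hdot'
          rcases mul_eq_zero.mp this with h | h
          · exact h
          · exact absurd h (pow_ne_zero 2 hx)
        right
        rw [hB, if_pos hv2, Set.mem_singleton_iff]
        refine (Projectivization.mk_eq_mk_iff K _ _ _ _).mpr
          ⟨Units.mk0 (x ^ 2) (pow_ne_zero 2 hx), ?_⟩
        refine funext3 ?_ ?_ ?_ <;>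
          simp [tl, Units.smul_def]
      · left
        refine ⟨x / y, ?_, ?_⟩
        · show v 2 * (x / y) ^ 2 + -(2 * v 1) * (x / y) + v 0 = 0
          field_simp
          linear_combination hdot'
        · rw [hf]
          refine ((Projectivization.mk_eq_mk_iff K _ _ _ _).mpr
            ⟨Units.mk0 (y ^ 2) (pow_ne_zero 2 hy), ?_⟩).symm
          refine funext3 ?_ ?_ ?_ <;>
            simp only [tl, Units.smul_def, Units.val_mk0, Pi.smul_apply, smul_eq_mul,
              Matrix.cons_val_zero, Matrix.cons_val_one, Matrix.head_cons,
              Matrix.cons_val_two, Matrix.tail_cons]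
          · field_simp
          · field_simp
            try ring
          · field_simp
            try ring
    · rintro (⟨u, hu, rfl⟩ | hℓ)
      · refine ⟨tangent_tl h2 _, ?_⟩
        rw [incid_mk_mk]
        have hu' : v 2 * u ^ 2 + -(2 * v 1) * u + v 0 = 0 := hu
        simp [dotV, tl]
        linear_combination hu'
      · rw [hB] at hℓ
        by_cases hv2 : v 2 = 0
        · rw [if_pos hv2, Set.mem_singleton_iff] at hℓ
          subst hℓ
          refine ⟨tangent_tl h2 _, ?_⟩
          rw [incid_mk_mk, tl10]
          simp [dotV, hv2]
        · rw [if_neg hv2] at hℓ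
          exact absurd hℓ (Set.notMem_empty _)
  have hdisj : Disjoint (f '' R) B := by
    rw [Set.disjoint_right]
    intro x hxB hxA
    obtain ⟨u, _, hfu⟩ := hxA
    by_cases hv2 : v 2 = 0
    · rw [hB, if_pos hv2, Set.mem_singleton_iff] at hxB
      rw [← hfu] at hxB
      obtain ⟨a, ha⟩ := (Projectivization.mk_eq_mk_iff K _ _ _ _).mp hxB
      have h0 := congrFun ha 0
      simp [tl, Units.smul_def] at h0
    · rw [hB, if_neg hv2] at hxB
      exact absurd hxB (Set.notMem_empty _)
  rw [hsplit, Set.ncard_union_eq hdisj (Set.toFinite _) (Set.toFinite _),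
    Set.ncard_image_of_injective R hinj]
  have hBcard : B.ncard = if v 2 = 0 then 1 else 0 := by
    rw [hB]; split_ifs <;> simp
  rw [hBcard]
  have hnz : ¬(v 2 = 0 ∧ -(2 * v 1) = 0 ∧ v 0 = 0) := by
    rintro ⟨ha, hb, hc⟩
    have hb' : v 1 = 0 := by
      rcases mul_eq_zero.mp (neg_eq_zero.mp hb) with h | h
      · exact absurd h h2
      · exact h
    exact hv (funext fun i => by fin_cases i <;> simp [ha, hb', hc])
  have hq := quad_count h2 (v 2) (-(2 * v 1)) (v 0) hnz
  have hdisc : (-(2 * v 1)) ^ 2 - 4 * v 2 * v 0 = 2 ^ 2 * Qv v := by simp [Qv]; ring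
  rw [hdisc] at hq
  rw [hq]
  have e1 : (2 ^ 2 * Qv v = 0) ↔ (Qv v = 0) := by
    constructor
    · intro h
      rcases mul_eq_zero.mp h with h | h
      · exact absurd h (pow_ne_zero 2 h2)
      · exact h
    · intro h; rw [h, mul_zero]
  have e2 : IsSquare (2 ^ 2 * Qv v) ↔ IsSquare (Qv v) := isSquare_sq_mul _ h2
  rw [if_congr e1 rfl (if_congr e2 rfl rfl)]

lemma external_mk (h2 : (2 : K) ≠ 0) {v : Fin 3 → K} (hv : v ≠ 0) :
    External (Projectivization.mk K v hv) ↔ Qv v ≠ 0 ∧ IsSquare (Qv v) := by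
  unfold External
  rw [point_count h2 v hv]
  split_ifs with hd hs
  · simp [hd]
  · simp [hd, hs]
  · simp [hd, hs]

lemma internal_mk (h2 : (2 : K) ≠ 0) {v : Fin 3 → K} (hv : v ≠ 0) :
    Internal (Projectivization.mk K v hv) ↔ ¬IsSquare (Qv v) := by
  unfold Internal
  rw [point_count h2 v hv]
  split_ifs with hd hs
  · simp [hd, IsSquare.zero]
  · simp [hs]
  · simp [hs]

lemma external_iff_rep (h2 : (2 : K) ≠ 0) (p : Pt K) :
    External p ↔ Qv p.rep ≠ 0 ∧ IsSquare (Qv p.rep) := by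
  conv_lhs => rw [← p.mk_rep]
  exact external_mk h2 _

lemma internal_iff_rep (h2 : (2 : K) ≠ 0) (p : Pt K) :
    Internal p ↔ ¬IsSquare (Qv p.rep) := by
  conv_lhs => rw [← p.mk_rep]
  exact internal_mk h2 _

lemma internal_not_incid {p ℓ : Pt K} (hp : Internal p) (hl : Tangent ℓ)
    (hinc : Incid p ℓ) : False := by
  have hempty : {ℓ' : Pt K | Tangent ℓ' ∧ Incid p ℓ'} = ∅ :=
    (Set.ncard_eq_zero (Set.toFinite _)).mp hp
  have : ℓ ∈ {ℓ' : Pt K | Tangent ℓ' ∧ Incid p ℓ'} := ⟨hl, hinc⟩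
  rw [hempty] at this
  exact absurd this (Set.notMem_empty _)

end Aux5
set_option linter.unusedSectionVars false
section Aux6

open Projectivization

variable {K : Type*} [Field K] [Fintype K]

lemma crossVec_smul_left (c : K) (u w : Fin 3 → K) :
    crossVec (c • u) w = c • crossVec u w := by
  refine funext3 ?_ ?_ ?_ <;>
    simp [crossVec, Pi.smul_apply, smul_eq_mul] <;> ring

lemma crossVec_smul_right (c : K) (u w : Fin 3 → K) :
    crossVec u (c • w) = c • crossVec u w := by
  refine funext3 ?_ ?_ ?_ <;>
    simp [crossVec, Pi.smul_apply, smul_eq_mul] <;> ring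

lemma dotV_crossVec_left (u w : Fin 3 → K) : dotV u (crossVec u w) = 0 := by
  simp [dotV, crossVec]; ring

lemma dotV_crossVec_right (u w : Fin 3 → K) : dotV w (crossVec u w) = 0 := by
  simp [dotV, crossVec]; ring

lemma crossVec_eq_zero {u w : Fin 3 → K} (hu : u ≠ 0) (h : crossVec u w = 0) :
    ∃ c : K, w = c • u := by
  have h0 := congrFun h 0
  have h1 := congrFun h 1
  have h2 := congrFun h 2
  simp only [crossVec, Matrix.cons_val_zero, Matrix.cons_val_one, Matrix.head_cons,
    Matrix.cons_val_two, Matrix.tail_cons, Pi.zero_apply] at h0 h1 h2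
  by_cases hu0 : u 0 ≠ 0
  · refine ⟨w 0 / u 0, funext3 ?_ ?_ ?_⟩ <;>
      simp only [Pi.smul_apply, smul_eq_mul] <;> field_simp
    · linear_combination h2
    · linear_combination -h1
  · push_neg at hu0
    by_cases hu1 : u 1 ≠ 0
    · refine ⟨w 1 / u 1, funext3 ?_ ?_ ?_⟩ <;>
        simp only [Pi.smul_apply, smul_eq_mul] <;> field_simp
      · linear_combination -h2
      · linear_combination h0
    · push_neg at hu1
      have hu2 : u 2 ≠ 0 := by
        intro hu2
        exact hu (funext fun i => by fin_cases i <;> simp [hu0, hu1, hu2])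
      refine ⟨w 2 / u 2, funext3 ?_ ?_ ?_⟩ <;>
        simp only [Pi.smul_apply, smul_eq_mul] <;> field_simp
      · linear_combination h1
      · linear_combination -h0

lemma ne_crossVec_rep {p q : Pt K} (h : p ≠ q) : crossVec p.rep q.rep ≠ 0 := by
  intro h0
  obtain ⟨c, hc⟩ := crossVec_eq_zero p.rep_nonzero h0
  have hcne : c ≠ 0 := by
    intro h'
    rw [h', zero_smul] at hc
    exact q.rep_nonzero hc
  apply h
  have hq : q = Projectivization.mk K (c • p.rep) (hc ▸ q.rep_nonzero) := by
    conv_lhs => rw [← q.mk_rep]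
    exact (Projectivization.mk_eq_mk_iff K _ _ _ _).mpr ⟨1, by rw [one_smul, hc]⟩
  rw [hq, mk_smul_eq c hcne _ _ p.rep_nonzero, p.mk_rep]

lemma lineThrough_eq {p q : Pt K} (h : p ≠ q) :
    lineThrough p q = Projectivization.mk K (crossVec p.rep q.rep) (ne_crossVec_rep h) := by
  unfold lineThrough
  rw [dif_pos (ne_crossVec_rep h)]

lemma incid_lineThrough_left {p q : Pt K} (h : p ≠ q) : Incid p (lineThrough p q) := by
  rw [lineThrough_eq h, incid_right_mk]
  exact dotV_crossVec_left _ _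

lemma meet_unique {l m r : Pt K} (h : l ≠ m) (h1 : Incid r l) (h2 : Incid r m) :
    r = meetPt l m := by
  have hc : crossVec l.rep m.rep ≠ 0 := ne_crossVec_rep h
  have hd1 : dotV r.rep l.rep = 0 := h1
  have hd2 : dotV r.rep m.rep = 0 := h2
  simp only [dotV] at hd1 hd2
  have hzero : crossVec (crossVec l.rep m.rep) r.rep = 0 := by
    refine funext3 ?_ ?_ ?_ <;>
      simp only [crossVec, Matrix.cons_val_zero, Matrix.cons_val_one, Matrix.head_cons,
        Matrix.cons_val_two, Matrix.tail_cons, Pi.zero_apply]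
    · linear_combination (m.rep 0) * hd1 - (l.rep 0) * hd2
    · linear_combination (m.rep 1) * hd1 - (l.rep 1) * hd2
    · linear_combination (m.rep 2) * hd1 - (l.rep 2) * hd2
  obtain ⟨c, hcr⟩ := crossVec_eq_zero hc hzero
  have hcne : c ≠ 0 := by
    intro h'
    rw [h', zero_smul] at hcr
    exact r.rep_nonzero hcr
  show r = lineThrough l m
  rw [lineThrough_eq h]
  conv_lhs => rw [← r.mk_rep]
  have : r.rep = c • crossVec l.rep m.rep := hcr
  calc Projectivization.mk K r.rep r.rep_nonzero
      = Projectivization.mk K (c • crossVec l.rep m.rep) (this ▸ r.rep_nonzero) := by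
        exact (Projectivization.mk_eq_mk_iff K _ _ _ _).mpr ⟨1, by rw [one_smul, this]⟩
    _ = Projectivization.mk K (crossVec l.rep m.rep) hc := mk_smul_eq c hcne _ _ hc

/-- pole of the chord joining conic points with parameters (x:y), (x':y') -/
def cpV (x y x' y' : K) : Fin 3 → K := ![2 * x * x', x * y' + x' * y, 2 * y * y']

lemma cpV_ne_zero (h2 : (2 : K) ≠ 0) {x y x' y' : K} (h : ¬(x = 0 ∧ y = 0))
    (h' : ¬(x' = 0 ∧ y' = 0)) : cpV x y x' y' ≠ 0 := by
  intro h0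
  have c0 := congrFun h0 0
  have c1 := congrFun h0 1
  have c2 := congrFun h0 2
  simp only [cpV, Matrix.cons_val_zero, Matrix.cons_val_one, Matrix.head_cons,
    Matrix.cons_val_two, Matrix.tail_cons, Pi.zero_apply] at c0 c1 c2
  have hxx : x * x' = 0 := by
    rcases mul_eq_zero.mp c0 with h | h
    · rcases mul_eq_zero.mp h with h | h
      · exact absurd h h2
      · rw [h, zero_mul]
    · rw [h, mul_zero]
  have hyy : y * y' = 0 := by
    rcases mul_eq_zero.mp c2 with h | h
    · rcases mul_eq_zero.mp h with h | h
      · exact absurd h h2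
      · rw [h, zero_mul]
    · rw [h, mul_zero]
  by_cases hx : x = 0
  · have hy : y ≠ 0 := fun hy => h ⟨hx, hy⟩
    have hy' : y' = 0 := by
      rcases mul_eq_zero.mp hyy with h | h
      · exact absurd h hy
      · exact h
    have hx' : x' ≠ 0 := fun hx' => h' ⟨hx', hy'⟩
    rw [hx, zero_mul, zero_add] at c1
    rcases mul_eq_zero.mp c1 with h | h
    · exact hx' h
    · exact hy h
  · have hx' : x' = 0 := by
      rcases mul_eq_zero.mp hxx with h | h
      · exact absurd h hx
      · exact h
    have hy' : y' ≠ 0 := fun hy' => h' ⟨hx', hy'⟩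
    rw [hx', zero_mul, add_zero] at c1
    rcases mul_eq_zero.mp c1 with h | h
    · exact hx h
    · exact hy' h

lemma crossVec_tl_tl (x y x' y' : K) :
    crossVec (tl x y) (tl x' y') = (x * y' - x' * y) • cpV x y x' y' := by
  refine funext3 ?_ ?_ ?_ <;>
    simp [crossVec, tl, cpV, Pi.smul_apply, smul_eq_mul] <;> ring

lemma Qv_cpV (x y x' y' : K) : Qv (cpV x y x' y') = (x * y' - x' * y) ^ 2 := by
  simp [Qv, cpV]; ring

lemma cpV_smul_snd (c x y x' y' : K) : cpV x y (c * x') (c * y') = c • cpV x y x' y' := by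
  refine funext3 ?_ ?_ ?_ <;>
    simp [cpV, Pi.smul_apply, smul_eq_mul] <;> ring

lemma param_prop {x y x' y' : K} (h : ¬(x = 0 ∧ y = 0)) (h' : ¬(x' = 0 ∧ y' = 0))
    (hd : x * y' - x' * y = 0) : ∃ c : K, c ≠ 0 ∧ x' = c * x ∧ y' = c * y := by
  by_cases hx : x = 0
  · have hy : y ≠ 0 := fun hy => h ⟨hx, hy⟩
    have hx' : x' = 0 := by
      have hxy : x' * y = 0 := by rw [hx] at hd; linear_combination -hd
      rcases mul_eq_zero.mp hxy with h0 | h0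
      · exact h0
      · exact absurd h0 hy
    have hy' : y' ≠ 0 := fun hy' => h' ⟨hx', hy'⟩
    exact ⟨y' / y, div_ne_zero hy' hy, by rw [hx', hx, mul_zero], by field_simp⟩
  · have hx' : x' ≠ 0 := by
      intro hx'
      have hxy : x * y' = 0 := by rw [hx'] at hd; linear_combination hd
      rcases mul_eq_zero.mp hxy with h0 | h0
      · exact absurd h0 hx
      · exact h' ⟨hx', h0⟩
    refine ⟨x' / x, div_ne_zero hx' hx, by field_simp, ?_⟩
    field_simp
    linear_combination hd

set_option maxHeartbeats 1000000 in
lemma big_identity (v : Fin 3 → K) (x0 y0 x1 y1 x2 y2 : K) :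
    Dv (crossVec v (cpV x0 y0 x1 y1)) * Dv (crossVec v (cpV x0 y0 x2 y2)) *
        Dv (crossVec v (cpV x1 y1 x2 y2))
      = (8 * dotV v (tl x0 y0) * dotV v (tl x1 y1) * dotV v (tl x2 y2)) ^ 2 := by
  simp only [Dv, crossVec, cpV, dotV, tl, Matrix.cons_val_zero, Matrix.cons_val_one,
    Matrix.head_cons, Matrix.cons_val_two, Matrix.tail_cons]
  ring

lemma sq_trichotomy {a b c : K} (ha : a ≠ 0) (hb : b ≠ 0) (hc : c ≠ 0)
    (h : IsSquare (a * b * c)) :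
    IsSquare c ↔ ((¬IsSquare a ∧ ¬IsSquare b) ∨ (IsSquare a ∧ IsSquare b)) := by
  classical
  have habc : a * b * c ≠ 0 := mul_ne_zero (mul_ne_zero ha hb) hc
  have hprod : quadraticChar K a * quadraticChar K b * quadraticChar K c = 1 := by
    rw [← map_mul, ← map_mul]
    exact (quadraticChar_one_iff_isSquare habc).mpr h
  rw [← quadraticChar_one_iff_isSquare ha, ← quadraticChar_one_iff_isSquare hb,
    ← quadraticChar_one_iff_isSquare hc]
  rcases quadraticChar_dichotomy ha with h1 | h1 <;>
    rcases quadraticChar_dichotomy hb with h2 | h2 <;>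
      rw [h1, h2] at hprod ⊢ <;> constructor <;> intro hgoal <;> omega
end Aux6
set_option linter.unusedSectionVars false
section Aux7

open Projectivization

variable {K : Type*} [Field K] [Fintype K]

lemma mk_eq_of_eq_smul {v w : Fin 3 → K} (hv : v ≠ 0) (hw : w ≠ 0) (c : K) (hc : c ≠ 0)
    (h : v = c • w) : Projectivization.mk K v hv = Projectivization.mk K w hw :=
  (Projectivization.mk_eq_mk_iff K _ _ _ _).mpr
    ⟨Units.mk0 c hc, by rw [Units.smul_def, Units.val_mk0, ← h]⟩

lemma tl_scale (c x y : K) : tl (c * x) (c * y) = (c ^ 2) • tl x y := by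
  refine funext3 ?_ ?_ ?_ <;> simp [tl, Pi.smul_apply, smul_eq_mul] <;> ring

lemma tl_mk_eq_of_d0 {x y x' y' : K} (h : ¬(x = 0 ∧ y = 0)) (h' : ¬(x' = 0 ∧ y' = 0))
    (hne : tl x y ≠ 0) (hne' : tl x' y' ≠ 0) (hd : x * y' - x' * y = 0) :
    Projectivization.mk K (tl x y) hne = Projectivization.mk K (tl x' y') hne' := by
  obtain ⟨c, hc, hx, hy⟩ := param_prop h h' hd
  have htl : tl x' y' = (c ^ 2) • tl x y := by rw [hx, hy]; exact tl_scale c x y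
  exact (mk_eq_of_eq_smul hne' hne (c ^ 2) (pow_ne_zero 2 hc) htl).symm

lemma tl_mk_eq_d0 (h2 : (2 : K) ≠ 0) {x y x' y' : K} {hne : tl x y ≠ 0} {hne' : tl x' y' ≠ 0}
    (h : Projectivization.mk K (tl x y) hne = Projectivization.mk K (tl x' y') hne') :
    x * y' - x' * y = 0 := by
  obtain ⟨a, ha⟩ := (Projectivization.mk_eq_mk_iff K _ _ _ _).mp h
  have c0 := congrFun ha 0
  have c1 := congrFun ha 1
  have c2 := congrFun ha 2
  simp only [tl, Units.smul_def, Pi.smul_apply, smul_eq_mul, Matrix.cons_val_zero,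
    Matrix.cons_val_one, Matrix.head_cons, Matrix.cons_val_two, Matrix.tail_cons] at c0 c1 c2
  have c1' : (a : K) * (x' * y') = x * y := by
    have h' : 2 * ((a : K) * (x' * y')) = 2 * (x * y) := by linear_combination -c1
    exact mul_left_cancel₀ h2 h'
  have hsq : (x * y' - x' * y) ^ 2 = 0 := by
    linear_combination (-(x' ^ 2)) * c0 + (2 * x' * y') * c1' + (-(y' ^ 2)) * c2
  exact (pow_eq_zero_iff (by norm_num : (2:ℕ) ≠ 0)).mp hsq

lemma meet_tangents_eq {x y x' y' : K} {hne : tl x y ≠ 0} {hne' : tl x' y' ≠ 0}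
    {l m : Pt K} (hlm : l ≠ m) (hl : l = Projectivization.mk K (tl x y) hne)
    (hm : m = Projectivization.mk K (tl x' y') hne')
    (hcp : cpV x y x' y' ≠ 0) (hd : x * y' - x' * y ≠ 0) :
    meetPt l m = Projectivization.mk K (cpV x y x' y') hcp := by
  obtain ⟨a, ha⟩ := exists_smul_eq_mk_rep K (tl x y) hne
  rw [← hl] at ha
  obtain ⟨b, hb⟩ := exists_smul_eq_mk_rep K (tl x' y') hne'
  rw [← hm] at hb
  have hcross : crossVec l.rep m.rep
      = ((a : K) * ((b : K) * (x * y' - x' * y))) • cpV x y x' y' := by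
    rw [← ha, ← hb, Units.smul_def, Units.smul_def, crossVec_smul_left, crossVec_smul_right,
      crossVec_tl_tl, smul_smul, smul_smul, mul_assoc]
  show lineThrough l m = _
  rw [lineThrough_eq hlm]
  exact mk_eq_of_eq_smul _ hcp _
    (mul_ne_zero (Units.ne_zero a) (mul_ne_zero (Units.ne_zero b) hd)) hcross

lemma line_char (h2 : (2 : K) ≠ 0) {p q : Pt K} (hpq : p ≠ q) {w : Fin 3 → K} (b : K)
    (hb : b ≠ 0) (hw : crossVec p.rep q.rep = b • w) :
    (Secant (lineThrough p q) ↔ (Dv w ≠ 0 ∧ IsSquare (Dv w))) ∧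
      (Passant (lineThrough p q) ↔ ¬IsSquare (Dv w)) := by
  have hb2 : (b ^ 2) * Dv w ≠ 0 ↔ Dv w ≠ 0 := by
    constructor
    · intro h hc; exact h (by rw [hc, mul_zero])
    · intro h hc
      rcases mul_eq_zero.mp hc with h' | h'
      · exact pow_ne_zero 2 hb h'
      · exact h h'
  constructor
  · rw [lineThrough_eq hpq, secant_mk h2, hw, Dv_smul, isSquare_sq_mul _ hb, hb2]
  · rw [lineThrough_eq hpq, passant_mk h2, hw, Dv_smul, isSquare_sq_mul _ hb]

end Aux7

/-- with `p` internal, `q0` an external point on the passant line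
`p⊥`, `ℓ*` a tangent through `q0`, `p1 ≠ p2` external points on `ℓ*`, and
`ℓ1, ℓ2` the tangent lines other than `ℓ*` through `p1, p2` respectively:
`ℓ1 ≠ ℓ2`, their intersection `p3` is external, and the line through `p` and
`p3` is secant iff the lines through `p` and `p1`, `p2` are both passant or
both secant. -/
theorem tangent_meet_secant_iff
    (K : Type*) [Field K] [Fintype K] (hodd : Odd (Fintype.card K))
    (p q0 lstar p1 p2 l1 l2 : Pt K)
    (hp : Internal p) (hq0 : External q0) (hq0perp : Incid q0 (perp p))
    (hlstar : Tangent lstar) (hq0l : Incid q0 lstar)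
    (hp1 : External p1) (hp1l : Incid p1 lstar)
    (hp2 : External p2) (hp2l : Incid p2 lstar) (hp12 : p1 ≠ p2)
    (hl1 : Tangent l1) (hp1l1 : Incid p1 l1) (hl1ne : l1 ≠ lstar)
    (hl2 : Tangent l2) (hp2l2 : Incid p2 l2) (hl2ne : l2 ≠ lstar) :
    l1 ≠ l2 ∧ External (meetPt l1 l2) ∧
      (Secant (lineThrough p (meetPt l1 l2)) ↔
        ((Passant (lineThrough p p1) ∧ Passant (lineThrough p p2)) ∨
         (Secant (lineThrough p p1) ∧ Secant (lineThrough p p2)))) := by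
  have h2 : (2 : K) ≠ 0 := two_ne_zero'' hodd
  obtain ⟨x0, y0, hne0, hleq0⟩ := tangent_param h2 hlstar
  obtain ⟨x1, y1, hne1, hleq1⟩ := tangent_param h2 hl1
  obtain ⟨x2, y2, hne2, hleq2⟩ := tangent_param h2 hl2
  have hpar0 := tl_params_ne hne0
  have hpar1 := tl_params_ne hne1
  have hpar2 := tl_params_ne hne2
  -- the internal point is on none of the three tangent lines
  have hC0 : dotV p.rep (tl x0 y0) ≠ 0 := by
    intro hc
    exact internal_not_incid hp hlstar (by rw [hleq0, incid_right_mk]; exact hc)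
  have hC1 : dotV p.rep (tl x1 y1) ≠ 0 := by
    intro hc
    exact internal_not_incid hp hl1 (by rw [hleq1, incid_right_mk]; exact hc)
  have hC2 : dotV p.rep (tl x2 y2) ≠ 0 := by
    intro hc
    exact internal_not_incid hp hl2 (by rw [hleq2, incid_right_mk]; exact hc)
  -- parameter distinctness
  have hd01 : x0 * y1 - x1 * y0 ≠ 0 := by
    intro hd
    apply hl1ne
    rw [hleq1, hleq0]
    exact (tl_mk_eq_of_d0 hpar0 hpar1 hne0 hne1 hd).symm
  have hd02 : x0 * y2 - x2 * y0 ≠ 0 := by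
    intro hd
    apply hl2ne
    rw [hleq2, hleq0]
    exact (tl_mk_eq_of_d0 hpar0 hpar2 hne0 hne2 hd).symm
  have hcp01 : cpV x0 y0 x1 y1 ≠ 0 := cpV_ne_zero h2 hpar0 hpar1
  have hcp02 : cpV x0 y0 x2 y2 ≠ 0 := cpV_ne_zero h2 hpar0 hpar2
  -- p1 and p2 as poles of the chords
  have hp1eq : p1 = Projectivization.mk K (cpV x0 y0 x1 y1) hcp01 := by
    rw [meet_unique (Ne.symm hl1ne) hp1l hp1l1]
    exact meet_tangents_eq (Ne.symm hl1ne) hleq0 hleq1 hcp01 hd01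
  have hp2eq : p2 = Projectivization.mk K (cpV x0 y0 x2 y2) hcp02 := by
    rw [meet_unique (Ne.symm hl2ne) hp2l hp2l2]
    exact meet_tangents_eq (Ne.symm hl2ne) hleq0 hleq2 hcp02 hd02
  have hd12 : x1 * y2 - x2 * y1 ≠ 0 := by
    intro hd
    obtain ⟨c, hc, hx, hy⟩ := param_prop hpar1 hpar2 hd
    apply hp12
    rw [hp1eq, hp2eq]
    have hcp : cpV x0 y0 x2 y2 = c • cpV x0 y0 x1 y1 := by
      rw [hx, hy]; exact cpV_smul_snd c x0 y0 x1 y1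
    exact (mk_eq_of_eq_smul hcp02 hcp01 c hc hcp).symm
  have hcp12 : cpV x1 y1 x2 y2 ≠ 0 := cpV_ne_zero h2 hpar1 hpar2
  have hl12 : l1 ≠ l2 := by
    intro h
    rw [hleq1, hleq2] at h
    exact hd12 (tl_mk_eq_d0 h2 h)
  have hp3eq : meetPt l1 l2 = Projectivization.mk K (cpV x1 y1 x2 y2) hcp12 :=
    meet_tangents_eq hl12 hleq1 hleq2 hcp12 hd12
  have hExt3 : External (meetPt l1 l2) := by
    rw [hp3eq, external_mk h2, Qv_cpV]
    exact ⟨pow_ne_zero 2 hd12, ⟨x1 * y2 - x2 * y1, by ring⟩⟩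
  -- the internal point p
  have hInt : ¬IsSquare (Qv p.rep) := (internal_iff_rep h2 p).mp hp
  have hpp1 : p ≠ p1 := by
    intro h
    rw [← h] at hp1
    exact hInt ((external_iff_rep h2 p).mp hp1).2
  have hpp2 : p ≠ p2 := by
    intro h
    rw [← h] at hp2
    exact hInt ((external_iff_rep h2 p).mp hp2).2
  have hpp3 : p ≠ meetPt l1 l2 := by
    intro h
    rw [← h] at hExt3
    exact hInt ((external_iff_rep h2 p).mp hExt3).2
  -- representatives
  obtain ⟨b1, hb1⟩ := Projectivization.exists_smul_eq_mk_rep K (cpV x0 y0 x1 y1) hcp01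
  rw [← hp1eq] at hb1
  obtain ⟨b2, hb2⟩ := Projectivization.exists_smul_eq_mk_rep K (cpV x0 y0 x2 y2) hcp02
  rw [← hp2eq] at hb2
  obtain ⟨b3, hb3⟩ := Projectivization.exists_smul_eq_mk_rep K (cpV x1 y1 x2 y2) hcp12
  rw [← hp3eq] at hb3
  -- line characterizations
  have hch1 := line_char h2 hpp1 (b1 : K) (Units.ne_zero b1)
    (by rw [← hb1, Units.smul_def, crossVec_smul_right])
  have hch2 := line_char h2 hpp2 (b2 : K) (Units.ne_zero b2)
    (by rw [← hb2, Units.smul_def, crossVec_smul_right])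
  have hch3 := line_char h2 hpp3 (b3 : K) (Units.ne_zero b3)
    (by rw [← hb3, Units.smul_def, crossVec_smul_right])
  -- the product identity
  have hbig := big_identity p.rep x0 y0 x1 y1 x2 y2
  have h8 : (8 : K) ≠ 0 := by
    have : (8 : K) = 2 ^ 3 := by norm_num
    rw [this]; exact pow_ne_zero 3 h2
  have hRne : 8 * dotV p.rep (tl x0 y0) * dotV p.rep (tl x1 y1) * dotV p.rep (tl x2 y2) ≠ 0 :=
    mul_ne_zero (mul_ne_zero (mul_ne_zero h8 hC0) hC1) hC2
  set e1 := Dv (crossVec p.rep (cpV x0 y0 x1 y1)) with he1def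
  set e2 := Dv (crossVec p.rep (cpV x0 y0 x2 y2)) with he2def
  set e3 := Dv (crossVec p.rep (cpV x1 y1 x2 y2)) with he3def
  have hprod_ne : e1 * e2 * e3 ≠ 0 := by rw [hbig]; exact pow_ne_zero 2 hRne
  have he1 : e1 ≠ 0 := fun h => hprod_ne (by rw [h, zero_mul, zero_mul])
  have he2 : e2 ≠ 0 := fun h => hprod_ne (by rw [h, mul_zero, zero_mul])
  have he3 : e3 ≠ 0 := fun h => hprod_ne (by rw [h, mul_zero])
  have hsq : IsSquare (e1 * e2 * e3) := by
    rw [hbig]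
    exact ⟨_, sq _⟩
  have htri := sq_trichotomy he1 he2 he3 hsq
  refine ⟨hl12, hExt3, ?_⟩
  rw [hch3.1, hch1.1, hch1.2, hch2.1, hch2.2]
  simp only [ne_eq, he1, he2, he3, not_false_eq_true, true_and]
  exact htri

end ConicCode
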